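/- Let M be a symmetric positive definite n×n matrix, q ∈ ℝⁿ, and let x* be the unique zero of F(x) = (M+I)x + (M−I)|x| + q. Suppose for each p > 0 there is x*(p) with F̃(p, x*(p)) = 0, where F̃ is the smoothed function. Then ‖F(x*(p))‖ ≤ (ln 3 / p)·‖M−I‖·√n; in particular F(x*(p)) → 0 as p → +∞. -/

import Mathlib

/-!
Each term of `1 + e^s + e^{-s}` lies between `0` and `e^{|s|}`, and one of them equals
`e^{|s|}`, so `|s| ≤ log (1 + e^s + e^{-s}) ≤ |s| + log 3`. Hence the smoothed absolute value
is within `log 3 / p` of `|t|` in every coordinate, so `F - F̃ p = (M - 1) (|x| - smoothAbs p x)`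
has Euclidean norm at most `‖M - 1‖ · √n · log 3 / p`, for every `x`. At the zero `x*(p)` of
`F̃ p` this bounds `F (x*(p))` itself.
-/

open Matrix

/-- The smoothing of `|t|` that turns `F` into `F̃ p`. -/
noncomputable def smoothAbs (p t : ℝ) : ℝ :=
  (1 / p) * Real.log (1 + Real.exp (p * t) + Real.exp (-(p * t)))

namespace Real

lemma exp_abs_le_one_add_exp_add_exp_neg (s : ℝ) : exp |s| ≤ 1 + exp s + exp (-s) := by
  rcases abs_cases s with ⟨h, -⟩ | ⟨h, -⟩ <;> rw [h] <;> linarith [exp_pos s, exp_pos (-s)]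

lemma one_add_exp_add_exp_neg_le (s : ℝ) : 1 + exp s + exp (-s) ≤ 3 * exp |s| := by
  have h₁ : 1 ≤ exp |s| := one_le_exp (abs_nonneg s)
  have h₂ : exp s ≤ exp |s| := exp_le_exp.2 (le_abs_self s)
  have h₃ : exp (-s) ≤ exp |s| := exp_le_exp.2 (neg_le_abs s)
  linarith

lemma abs_le_log_one_add_exp_add_exp_neg (s : ℝ) : |s| ≤ log (1 + exp s + exp (-s)) := by
  rw [le_log_iff_exp_le (by positivity)]
  exact exp_abs_le_one_add_exp_add_exp_neg s

lemma log_one_add_exp_add_exp_neg_le (s : ℝ) : log (1 + exp s + exp (-s)) ≤ |s| + log 3 := by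
  rw [log_le_iff_le_exp (by positivity), exp_add, exp_log three_pos, mul_comm]
  exact one_add_exp_add_exp_neg_le s

end Real

lemma abs_abs_sub_smoothAbs_le {p : ℝ} (hp : 0 < p) (t : ℝ) :
    |(|t| - smoothAbs p t)| ≤ Real.log 3 / p := by
  have hpt : |p * t| = p * |t| := by rw [abs_mul, abs_of_pos hp]
  have lower := Real.abs_le_log_one_add_exp_add_exp_neg (p * t)
  have upper := Real.log_one_add_exp_add_exp_neg_le (p * t)
  rw [hpt] at lower upper
  have hlower : |t| ≤ smoothAbs p t := by
    rw [smoothAbs, one_div_mul_eq_div, le_div_iff₀ hp]; linarith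
  have hupper : smoothAbs p t ≤ |t| + Real.log 3 / p := by
    rw [smoothAbs, one_div_mul_eq_div, div_le_iff₀ hp, add_mul, div_mul_cancel₀ _ hp.ne']
    linarith
  rw [abs_le]; constructor <;> linarith

lemma EuclideanSpace.norm_toLp_le_sqrt_card_mul_norm {ι : Type*} [Fintype ι] (v : ι → ℝ) :
    ‖WithLp.toLp 2 v‖ ≤ √(Fintype.card ι) * ‖v‖ := by
  rw [EuclideanSpace.norm_eq, ← Real.sqrt_sq (norm_nonneg v), ← Real.sqrt_mul (by positivity)]
  refine Real.sqrt_le_sqrt ?_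
  calc ∑ i, ‖v i‖ ^ 2 ≤ ∑ _i : ι, ‖v‖ ^ 2 := by
        gcongr with i; exact norm_le_pi_norm v i
    _ = Fintype.card ι * ‖v‖ ^ 2 := by simp

/-- With `A = M - 1` the vector on the left is `F x - F̃ p x`. -/
lemma norm_mulVec_abs_sub_smoothAbs_le {ι : Type*} [Fintype ι] [DecidableEq ι]
    (A : Matrix ι ι ℝ) {p : ℝ} (hp : 0 < p) (x : ι → ℝ) :
    ‖WithLp.toLp 2 (A *ᵥ fun i => |x i| - smoothAbs p (x i))‖ ≤
      (Real.log 3 / p) * ‖toEuclideanCLM (𝕜 := ℝ) A‖ * √(Fintype.card ι) := by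
  set v := fun i => |x i| - smoothAbs p (x i)
  have hsup : ‖v‖ ≤ Real.log 3 / p :=
    (pi_norm_le_iff_of_nonneg (by positivity)).2 fun i => abs_abs_sub_smoothAbs_le hp (x i)
  calc ‖WithLp.toLp 2 (A *ᵥ v)‖ = ‖toEuclideanCLM (𝕜 := ℝ) A (WithLp.toLp 2 v)‖ := by
        rw [toEuclideanCLM_toLp]
    _ ≤ ‖toEuclideanCLM (𝕜 := ℝ) A‖ * (√(Fintype.card ι) * (Real.log 3 / p)) := by
        refine (ContinuousLinearMap.le_opNorm _ _).trans ?_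
        gcongr
        exact (EuclideanSpace.norm_toLp_le_sqrt_card_mul_norm v).trans (by gcongr)
    _ = (Real.log 3 / p) * ‖toEuclideanCLM (𝕜 := ℝ) A‖ * √(Fintype.card ι) := by ring

theorem stmt_13_general {n : ℕ} (M : Matrix (Fin n) (Fin n) ℝ)
    (q : Fin n → ℝ)
    (F : (Fin n → ℝ) → (Fin n → ℝ))
    (hF : F = fun x => (M + 1).mulVec x + (M - 1).mulVec (fun i => |x i|) + q)
    (xs : ℝ → Fin n → ℝ)
    (hxs : ∀ p : ℝ, 0 < p →
      (M + 1).mulVec (xs p) +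
        (M - 1).mulVec (fun i => (1 / p) * Real.log (1 + Real.exp (p * xs p i) +
          Real.exp (-(p * xs p i)))) + q = 0) :
    (∀ p : ℝ, 0 < p →
      ‖(WithLp.equiv 2 (Fin n → ℝ)).symm (F (xs p))‖ ≤
        (Real.log 3 / p) * ‖Matrix.toEuclideanCLM (𝕜 := ℝ) (n := Fin n) (M - 1)‖ *
          Real.sqrt n) ∧
    Filter.Tendsto (fun p => (WithLp.equiv 2 (Fin n → ℝ)).symm (F (xs p)))
      Filter.atTop (nhds 0) := by
  have bound : ∀ p : ℝ, 0 < p →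
      ‖(WithLp.equiv 2 (Fin n → ℝ)).symm (F (xs p))‖ ≤
        (Real.log 3 / p) * ‖Matrix.toEuclideanCLM (𝕜 := ℝ) (n := Fin n) (M - 1)‖ *
          Real.sqrt n := by
    intro p hp
    have hres : F (xs p) = (M - 1) *ᵥ fun i => |xs p i| - smoothAbs p (xs p i) := by
      rw [← sub_zero (F (xs p)), ← hxs p hp, hF]
      simp only [smoothAbs, ← Pi.sub_def, mulVec_sub]
      abel
    rw [WithLp.equiv_symm_apply, hres]
    simpa only [Fintype.card_fin] using norm_mulVec_abs_sub_smoothAbs_le (M - 1) hp (xs p)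
  set C := ‖toEuclideanCLM (𝕜 := ℝ) (n := Fin n) (M - 1)‖
  refine ⟨bound, squeeze_zero_norm' (a := fun p => (Real.log 3 / p) * C * √n) ?_ ?_⟩
  · filter_upwards [Filter.eventually_gt_atTop 0] with p hp
    exact bound p hp
  · have hdecay := (tendsto_const_nhds (x := Real.log 3)).div_atTop Filter.tendsto_id
    simpa using (hdecay.mul_const C).mul_const √n

theorem stmt_13 {n : ℕ} (M : Matrix (Fin n) (Fin n) ℝ)
    (hsymm : M.IsSymm) (hpd : M.PosDef) (q : Fin n → ℝ)
    (F : (Fin n → ℝ) → (Fin n → ℝ))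
    (hF : F = fun x => (M + 1).mulVec x + (M - 1).mulVec (fun i => |x i|) + q)
    (xstar : Fin n → ℝ) (hx : F xstar = 0) (hxu : ∀ y, F y = 0 → y = xstar)
    (xs : ℝ → Fin n → ℝ)
    (hxs : ∀ p : ℝ, 0 < p →
      (M + 1).mulVec (xs p) +
        (M - 1).mulVec (fun i => (1 / p) * Real.log (1 + Real.exp (p * xs p i) +
          Real.exp (-(p * xs p i)))) + q = 0) :
    (∀ p : ℝ, 0 < p →
      ‖(WithLp.equiv 2 (Fin n → ℝ)).symm (F (xs p))‖ ≤
        (Real.log 3 / p) * ‖Matrix.toEuclideanCLM (𝕜 := ℝ) (n := Fin n) (M - 1)‖ *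
          Real.sqrt n) ∧
    Filter.Tendsto (fun p => (WithLp.equiv 2 (Fin n → ℝ)).symm (F (xs p)))
      Filter.atTop (nhds 0) :=
  stmt_13_general M q F hF xs hxs
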